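/- If n ≡ 0 (mod 4) and n is not a power of 2, then the chromatic number of Ω_n is strictly greater than n. -/

import Mathlib

/-- Ω_n: vertices are ±1-vectors of length n (represented as `Fin n → ℤˣ`),
adjacent iff distinct and orthogonal. -/
def Omega (n : ℕ) : SimpleGraph (Fin n → ℤˣ) where
  Adj x y := x ≠ y ∧ ∑ i, ((x i : ℤ) * (y i : ℤ)) = 0
  symm := by
    constructor
    intro x y ⟨h1, h2⟩
    refine ⟨h1.symm, ?_⟩
    rw [← h2]
    exact Finset.sum_congr rfl fun i _ => mul_comm _ _
  loopless := ⟨fun x h => h.1 rfl⟩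

namespace OmegaAux
variable {n : ℕ}

def chiu (T : Finset (Fin n)) (x : Fin n → ℤˣ) : ℤˣ := ∏ i ∈ T, x i
def chi (T : Finset (Fin n)) (x : Fin n → ℤˣ) : ℤ := (chiu T x : ℤ)

lemma chi_mul (T : Finset (Fin n)) (x y : Fin n → ℤˣ) :
    chi T (x * y) = chi T x * chi T y := by
  simp [chi, chiu, Finset.prod_mul_distrib]

lemma chi_mul_self (T : Finset (Fin n)) (x : Fin n → ℤˣ) :
    chi T x * chi T x = 1 := by
  simp [chi, ← Units.val_mul, Int.units_mul_self]

lemma chi_empty (x : Fin n → ℤˣ) : chi (∅ : Finset (Fin n)) x = 1 := by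
  simp [chi, chiu]

lemma mul_self_eq_one (x : Fin n → ℤˣ) : x * x = 1 := by
  funext i
  exact Int.units_mul_self (x i)

lemma mul_eq_one_iff {x y : Fin n → ℤˣ} : x * y = 1 ↔ x = y := by
  constructor
  · intro h
    have := congrArg (fun w => x * w) h
    simpa [← mul_assoc, mul_self_eq_one] using this.symm
  · rintro rfl; exact mul_self_eq_one x

lemma sum_chi (w : Fin n → ℤˣ) :
    ∑ T : Finset (Fin n), chi T w = if w = 1 then 2 ^ n else 0 := by
  have h := Finset.prod_add (fun i => ((w i : ℤ))) (fun _ => (1 : ℤ)) Finset.univ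
  simp only [Finset.prod_const_one, mul_one, Finset.powerset_univ] at h
  simp only [chi, chiu, Units.coe_prod]
  rw [← h]
  by_cases hw : w = 1
  · subst hw
    simp
  · rw [if_neg hw]
    obtain ⟨i, hi⟩ : ∃ i, w i ≠ 1 := by
      by_contra hc
      push_neg at hc
      exact hw (funext hc)
    have : w i = -1 := (Int.units_eq_one_or (w i)).resolve_left hi
    apply Finset.prod_eq_zero (Finset.mem_univ i)
    rw [this]; norm_num

/-- the connection set: vectors with coordinate sum 0 -/
def SS (n : ℕ) : Finset (Fin n → ℤˣ) := Finset.univ.filter (fun z => ∑ i, (z i : ℤ) = 0)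

/-- eigenvalue attached to a character -/
def lam (T : Finset (Fin n)) : ℤ := ∑ z ∈ SS n, chi T z

/-- Fourier coefficient (unnormalized) -/
def gg (f : (Fin n → ℤˣ) → ℤ) (T : Finset (Fin n)) : ℤ := ∑ x, f x * chi T x

lemma gg_empty (f : (Fin n → ℤˣ) → ℤ) : gg f ∅ = ∑ x, f x := by
  simp [gg, chi_empty]

lemma gg_sq (f : (Fin n → ℤˣ) → ℤ) (T : Finset (Fin n)) :
    (gg f T)^2 = ∑ x, ∑ y, (f x * f y) * chi T (x * y) := by
  rw [sq, gg, Finset.sum_mul_sum]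
  refine Finset.sum_congr rfl fun x _ => Finset.sum_congr rfl fun y _ => ?_
  rw [chi_mul]; ring

lemma parseval (f : (Fin n → ℤˣ) → ℤ) :
    ∑ T : Finset (Fin n), (gg f T)^2 = 2 ^ n * ∑ x, (f x)^2 := by
  simp only [gg_sq]
  rw [Finset.sum_comm]
  have step : ∀ x, (∑ T : Finset (Fin n), ∑ y, (f x * f y) * chi T (x * y))
      = 2 ^ n * (f x)^2 := by
    intro x
    rw [Finset.sum_comm]
    have inner : ∀ y, (∑ T : Finset (Fin n), (f x * f y) * chi T (x * y))
        = if x = y then (f x * f y) * 2 ^ n else 0 := by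
      intro y
      rw [← Finset.mul_sum, sum_chi]
      simp only [mul_eq_one_iff]
      split <;> simp
    simp only [inner]
    rw [Finset.sum_ite_eq Finset.univ x (fun y => f x * f y * 2 ^ n)]
    simp [sq]; ring
  simp only [step, ← Finset.mul_sum]

lemma sum_lam_sq (f : (Fin n → ℤˣ) → ℤ) :
    ∑ T : Finset (Fin n), lam T * (gg f T)^2
      = 2 ^ n * ∑ x, ∑ y, (if x * y ∈ SS n then f x * f y else 0) := by
  have key : ∀ T : Finset (Fin n), lam T * (gg f T)^2
      = ∑ x, ∑ y, ∑ z ∈ SS n, (f x * f y) * chi T (z * (x * y)) := by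
    intro T
    rw [gg_sq, Finset.mul_sum]
    refine Finset.sum_congr rfl fun x _ => ?_
    rw [Finset.mul_sum]
    refine Finset.sum_congr rfl fun y _ => ?_
    rw [lam, Finset.sum_mul]
    refine Finset.sum_congr rfl fun z hz => ?_
    simp only [chi_mul]; ring
  simp only [key]
  rw [Finset.sum_comm]
  have swap2 : ∀ x : Fin n → ℤˣ,
      (∑ T : Finset (Fin n), ∑ y, ∑ z ∈ SS n, (f x * f y) * chi T (z * (x * y)))
      = ∑ y, ∑ z ∈ SS n, ∑ T : Finset (Fin n), (f x * f y) * chi T (z * (x * y)) := by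
    intro x
    rw [Finset.sum_comm]
    exact Finset.sum_congr rfl fun y _ => Finset.sum_comm
  simp only [swap2]
  rw [Finset.mul_sum]
  refine Finset.sum_congr rfl fun x _ => ?_
  rw [Finset.mul_sum]
  refine Finset.sum_congr rfl fun y _ => ?_
  have inner : ∀ z : Fin n → ℤˣ, (∑ T : Finset (Fin n), (f x * f y) * chi T (z * (x * y)))
      = if z = x * y then (f x * f y) * 2 ^ n else 0 := by
    intro z
    rw [← Finset.mul_sum, sum_chi]
    simp only [mul_eq_one_iff]
    split <;> simp
  simp only [inner]
  rw [Finset.sum_ite_eq' (SS n) (x * y) (fun _ => f x * f y * 2 ^ n)]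
  split <;> ring



lemma lam_eq_sum_ite (T : Finset (Fin n)) :
    lam T = ∑ z : Fin n → ℤˣ, if (∑ i, (z i : ℤ)) = 0 then chi T z else 0 := by
  rw [lam, SS, Finset.sum_filter]

lemma chi_image (σ : Equiv.Perm (Fin n)) (T : Finset (Fin n)) (z : Fin n → ℤˣ) :
    chi (T.image σ) z = chi T (z ∘ σ) := by
  simp only [chi, chiu]
  rw [Finset.prod_image (fun a _ b _ h => σ.injective h)]
  rfl

lemma lam_image (σ : Equiv.Perm (Fin n)) (T : Finset (Fin n)) :
    lam (T.image σ) = lam T := by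
  rw [lam_eq_sum_ite, lam_eq_sum_ite]
  refine (Fintype.sum_equiv (Equiv.arrowCongr σ (Equiv.refl ℤˣ)) _ _ ?_).symm
  intro z
  have hz : (Equiv.arrowCongr σ (Equiv.refl ℤˣ)) z = z ∘ σ.symm := rfl
  rw [hz, chi_image]
  have hsum : (∑ i, ((z ∘ σ.symm) i : ℤ)) = ∑ i, (z i : ℤ) :=
    Equiv.sum_comp σ.symm (fun i => (z i : ℤ))
  have hcomp : (z ∘ σ.symm) ∘ σ = z := by
    funext i; simp
  rw [hsum, hcomp]

lemma lam_card_eq {T U : Finset (Fin n)} (h : T.card = U.card) : lam T = lam U := by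
  classical
  let e : {x // x ∈ T} ≃ {x // x ∈ U} := Finset.equivOfCardEq h
  let σ : Equiv.Perm (Fin n) := e.extendSubtype
  have himg : T.image σ = U := by
    apply Finset.eq_of_subset_of_card_le
    · intro b hb
      rw [Finset.mem_image] at hb
      obtain ⟨a, ha, rfl⟩ := hb
      exact e.extendSubtype_mem a ha
    · rw [Finset.card_image_of_injective _ σ.injective, h]
  rw [← himg, lam_image]

/-- on the sum-zero set, the full character is 1 when 4 ∣ n -/
lemma chi_univ_eq_one (hn : 4 ∣ n) {z : Fin n → ℤˣ} (hz : (∑ i, (z i : ℤ)) = 0) :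
    chi (Finset.univ : Finset (Fin n)) z = 1 := by
  classical
  have hzi : ∀ i, (z i : ℤ) = if z i = -1 then -1 else 1 := by
    intro i
    rcases Int.units_eq_one_or (z i) with h | h <;> simp [h]
  have hsplit := Finset.card_filter_add_card_filter_not
    (s := (Finset.univ : Finset (Fin n))) (p := fun i => z i = -1)
  simp only [Finset.card_univ, Fintype.card_fin] at hsplit
  have hNcard : (Finset.univ.filter (fun i => z i = -1)).card * 2 = n := by
    have h1 : (∑ i, (z i : ℤ)) = ∑ i, (if z i = -1 then (-1:ℤ) else 1) :=
      Finset.sum_congr rfl fun i _ => hzi i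
    rw [Finset.sum_ite, Finset.sum_const, Finset.sum_const, hz] at h1
    simp only [nsmul_eq_mul, mul_one, mul_neg] at h1
    omega
  have heven : Even (Finset.univ.filter (fun i => z i = -1)).card := by
    obtain ⟨m, hm⟩ := hn
    exact ⟨m, by omega⟩
  have hprod : chi (Finset.univ : Finset (Fin n)) z
      = (-1 : ℤ) ^ (Finset.univ.filter (fun i => z i = -1)).card := by
    simp only [chi, chiu, Units.coe_prod]
    have h1 : (∏ i, (z i : ℤ)) = ∏ i, (if z i = -1 then (-1:ℤ) else 1) :=
      Finset.prod_congr rfl fun i _ => hzi i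
    rw [h1, Finset.prod_ite, Finset.prod_const, Finset.prod_const]
    simp
  rw [hprod]
  exact Even.neg_one_pow heven

lemma lam_compl (hn : 4 ∣ n) (T : Finset (Fin n)) : lam Tᶜ = lam T := by
  rw [lam, lam]
  refine Finset.sum_congr rfl fun z hz => ?_
  have hz' : (∑ i, (z i : ℤ)) = 0 := (Finset.mem_filter.mp hz).2
  have huniv : chi T z * chi Tᶜ z = 1 := by
    have h0 := Finset.prod_mul_prod_compl T (fun i => ((z i : ℤ)))
    have h2 : chi T z * chi Tᶜ z = chi (Finset.univ : Finset (Fin n)) z := by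
      simp only [chi, chiu, Units.coe_prod]
      exact h0
    rw [h2, chi_univ_eq_one hn hz']
  calc chi Tᶜ z = chi Tᶜ z * (chi T z * chi T z) := by rw [chi_mul_self]; ring
    _ = (chi T z * chi Tᶜ z) * chi T z := by ring
    _ = chi T z := by rw [huniv]; ring

lemma lam_odd {T : Finset (Fin n)} (hT : Odd T.card) : lam T = 0 := by
  classical
  set c : Fin n → ℤˣ := fun _ => -1 with hc
  set F : (Fin n → ℤˣ) → ℤ := fun z => if (∑ i, (z i : ℤ)) = 0 then chi T z else 0 with hF
  have hneg : ∀ z, F (c * z) = - F z := by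
    intro z
    have h1 : (∑ i, ((c * z) i : ℤ)) = -∑ i, (z i : ℤ) := by
      rw [← Finset.sum_neg_distrib]
      refine Finset.sum_congr rfl fun i _ => ?_
      simp [hc]
    have h2 : chi T (c * z) = -chi T z := by
      rw [chi_mul]
      have hcc : chi T c = (-1) ^ T.card := by
        simp [chi, chiu, hc]
      rw [hcc, Odd.neg_one_pow hT]
      ring
    simp only [hF, h1, h2, neg_eq_zero]
    split <;> simp
  have hre : ∑ z, F (c * z) = ∑ z, F z :=
    Fintype.sum_equiv (Equiv.mulLeft c) _ _ (fun z => rfl)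
  have key : lam T = - lam T := by
    rw [lam_eq_sum_ite]
    calc (∑ z, F z) = ∑ z, F (c * z) := hre.symm
      _ = ∑ z, -F z := Finset.sum_congr rfl fun z _ => hneg z
      _ = -∑ z, F z := by rw [Finset.sum_neg_distrib]
  omega


lemma coe_mul_self (u : ℤˣ) : (u : ℤ) * (u : ℤ) = 1 := by
  rw [← Units.val_mul, Int.units_mul_self]; rfl

lemma chi_erase {T : Finset (Fin n)} {i : Fin n} (hi : i ∈ T) (z : Fin n → ℤˣ) :
    chi (T.erase i) z = chi T z * (z i : ℤ) := by
  have h1 : (z i : ℤ) * chi (T.erase i) z = chi T z := by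
    simp only [chi, chiu, Units.coe_prod]
    exact Finset.mul_prod_erase T (fun j => ((z j : ℤ))) hi
  calc chi (T.erase i) z = ((z i : ℤ) * (z i : ℤ)) * chi (T.erase i) z := by
        rw [coe_mul_self]; ring
    _ = ((z i : ℤ) * chi (T.erase i) z) * (z i : ℤ) := by ring
    _ = chi T z * (z i : ℤ) := by rw [h1]

lemma chi_insert {T : Finset (Fin n)} {i : Fin n} (hi : i ∉ T) (z : Fin n → ℤˣ) :
    chi (insert i T) z = chi T z * (z i : ℤ) := by
  simp only [chi, chiu, Units.coe_prod]
  rw [Finset.prod_insert hi]; ring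

lemma rec_general (T : Finset (Fin n)) :
    (∑ i ∈ T, lam (T.erase i)) + ∑ i ∈ Tᶜ, lam (insert i T) = 0 := by
  classical
  have h1 : ∑ i ∈ T, lam (T.erase i) = ∑ z ∈ SS n, ∑ i ∈ T, chi T z * (z i : ℤ) := by
    simp only [lam]
    rw [Finset.sum_comm]
    exact Finset.sum_congr rfl fun z _ =>
      Finset.sum_congr rfl fun i hi => chi_erase hi z
  have h2 : ∑ i ∈ Tᶜ, lam (insert i T) = ∑ z ∈ SS n, ∑ i ∈ Tᶜ, chi T z * (z i : ℤ) := by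
    simp only [lam]
    rw [Finset.sum_comm]
    exact Finset.sum_congr rfl fun z _ =>
      Finset.sum_congr rfl fun i hi => chi_insert (Finset.mem_compl.mp hi) z
  rw [h1, h2, ← Finset.sum_add_distrib]
  refine Finset.sum_eq_zero fun z hz => ?_
  rw [Finset.sum_add_sum_compl T (fun i => chi T z * (z i : ℤ)), ← Finset.mul_sum,
    (Finset.mem_filter.mp hz).2, mul_zero]

lemma card_lt_filter (t : ℕ) (h : t ≤ n) :
    (Finset.univ.filter (fun i : Fin n => (i : ℕ) < t)).card = t := by
  have himg : Finset.univ.filter (fun i : Fin n => (i : ℕ) < t)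
      = Finset.map (Fin.castLEEmb h) Finset.univ := by
    ext i
    simp only [Finset.mem_filter, Finset.mem_univ, true_and, Finset.mem_map,
      Fin.castLEEmb, Function.Embedding.coeFn_mk]
    constructor
    · intro hi
      exact ⟨⟨(i : ℕ), hi⟩, Fin.ext rfl⟩
    · rintro ⟨j, _, rfl⟩
      simpa using j.isLt
  rw [himg, Finset.card_map, Finset.card_univ, Fintype.card_fin]

/-- `lam` of the canonical set of size `t` -/
def lamn (n t : ℕ) : ℤ := lam (Finset.univ.filter (fun i : Fin n => (i : ℕ) < t))

lemma lam_eq_lamn (T : Finset (Fin n)) : lam T = lamn n T.card := by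
  refine lam_card_eq ?_
  rw [card_lt_filter T.card (by simpa using T.card_le_univ)]

lemma lamn_rec (t : ℕ) (h : t + 1 ≤ n) :
    ((t : ℤ) + 1) * lamn n t + ((n : ℤ) - ((t : ℤ) + 1)) * lamn n (t + 2) = 0 := by
  classical
  set T := Finset.univ.filter (fun i : Fin n => (i : ℕ) < t + 1) with hTdef
  have hT : T.card = t + 1 := card_lt_filter (t + 1) h
  have h1 : ∑ i ∈ T, lam (T.erase i) = ((t : ℤ) + 1) * lamn n t := by
    have : ∀ i ∈ T, lam (T.erase i) = lamn n t := by
      intro i hi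
      rw [lam_eq_lamn, Finset.card_erase_of_mem hi, hT]
      norm_num
    rw [Finset.sum_congr rfl this, Finset.sum_const, hT]
    push_cast [nsmul_eq_mul]
    ring
  have h2 : ∑ i ∈ Tᶜ, lam (insert i T) = ((n : ℤ) - ((t : ℤ) + 1)) * lamn n (t + 2) := by
    have : ∀ i ∈ Tᶜ, lam (insert i T) = lamn n (t + 2) := by
      intro i hi
      rw [lam_eq_lamn, Finset.card_insert_of_notMem (Finset.mem_compl.mp hi), hT]
    rw [Finset.sum_congr rfl this, Finset.sum_const, Finset.card_compl, hT,
      Fintype.card_fin, nsmul_eq_mul]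
    rw [Nat.cast_sub h]
    push_cast
    ring
  have h0 := rec_general T
  rw [h1, h2] at h0
  exact h0

lemma lamn_odd {t : ℕ} (ht : t ≤ n) (hodd : Odd t) : lamn n t = 0 := by
  rw [lamn]
  exact lam_odd (by rwa [card_lt_filter t ht])

lemma lamn_compl (hn : 4 ∣ n) {t : ℕ} (ht : t ≤ n) : lamn n (n - t) = lamn n t := by
  have h1 : lam (Finset.univ.filter (fun i : Fin n => (i : ℕ) < t))ᶜ
      = lamn n t := by
    rw [lam_compl hn]
    rfl
  rw [← h1, lam_eq_lamn, Finset.card_compl, card_lt_filter t ht, Fintype.card_fin]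

lemma lamn_zero : lamn n 0 = ((SS n).card : ℤ) := by
  have h0 : (Finset.univ.filter (fun i : Fin n => (i : ℕ) < 0)) = (∅ : Finset (Fin n)) := by
    ext i; simp
  rw [lamn, h0, lam]
  simp [chi_empty]

lemma SS_card_pos (hn2 : 2 ∣ n) : 0 < (SS n).card := by
  rw [Finset.card_pos]
  refine ⟨fun i => if (i : ℕ) < n / 2 then -1 else 1, ?_⟩
  rw [SS, Finset.mem_filter]
  refine ⟨Finset.mem_univ _, ?_⟩
  have hval : ∀ i : Fin n, (((if ((i : ℕ) < n / 2) then (-1 : ℤˣ) else 1) : ℤˣ) : ℤ)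
      = if (i : ℕ) < n / 2 then (-1 : ℤ) else 1 := by
    intro i; split <;> rfl
  rw [Finset.sum_congr rfl fun i _ => hval i]
  rw [Finset.sum_ite, Finset.sum_const, Finset.sum_const]
  have hc1 := card_lt_filter (n / 2) (Nat.div_le_self n 2)
  have hc2 := Finset.card_filter_add_card_filter_not
      (s := (Finset.univ : Finset (Fin n))) (p := fun i : Fin n => (i : ℕ) < n / 2)
  simp only [Finset.card_univ, Fintype.card_fin] at hc2
  simp only [nsmul_eq_mul, mul_one, mul_neg]
  omega

lemma key1 (hn : 4 ∣ n) : ∀ s : ℕ, 1 ≤ s → 2 * s ≤ n / 2 →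
    ((n : ℤ) - 1) * |lamn n (2 * s)| ≤ lamn n 0 := by
  have hd : (0 : ℤ) ≤ lamn n 0 := by rw [lamn_zero]; positivity
  intro s
  induction s with
  | zero => omega
  | succ s ih =>
    intro _ h2
    have hn8 : 4 * s + 4 ≤ n := by omega
    rcases Nat.eq_zero_or_pos s with rfl | hs1
    · -- base case : t = 2
      have hrec := lamn_rec (n := n) 0 (by omega)
      push_cast at hrec
      have hB : ((n : ℤ) - 1) * lamn n 2 = -(lamn n 0) := by linarith
      have : ((n : ℤ) - 1) * |lamn n 2| = |((n : ℤ) - 1) * lamn n 2| := by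
        rw [abs_mul, abs_of_nonneg (by push_cast; omega : (0:ℤ) ≤ (n : ℤ) - 1)]
      rw [show 2 * 1 = 2 from rfl, this, hB, abs_neg, abs_of_nonneg hd]
    · -- inductive step
      have hrec := lamn_rec (n := n) (2 * s) (by omega)
      push_cast at hrec
      have hB : ((n : ℤ) - (2 * s + 1)) * lamn n (2 * s + 2)
          = -((2 * (s : ℤ) + 1) * lamn n (2 * s)) := by linarith
      have habs : ((n : ℤ) - (2 * s + 1)) * |lamn n (2 * s + 2)|
          = (2 * (s : ℤ) + 1) * |lamn n (2 * s)| := by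
        calc ((n : ℤ) - (2 * s + 1)) * |lamn n (2 * s + 2)|
            = |((n : ℤ) - (2 * s + 1)) * lamn n (2 * s + 2)| := by
              rw [abs_mul, abs_of_nonneg (by push_cast; omega : (0:ℤ) ≤ (n : ℤ) - (2 * s + 1))]
          _ = |(2 * (s : ℤ) + 1) * lamn n (2 * s)| := by rw [hB, abs_neg]
          _ = (2 * (s : ℤ) + 1) * |lamn n (2 * s)| := by
              rw [abs_mul, abs_of_nonneg (by positivity)]
      have hmono : |lamn n (2 * s + 2)| ≤ |lamn n (2 * s)| := by
        have hq : (2 * (s : ℤ) + 1) ≤ (n : ℤ) - (2 * s + 1) := by push_cast; omega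
        have hpos : (0 : ℤ) < (n : ℤ) - (2 * s + 1) := by push_cast; omega
        nlinarith [abs_nonneg (lamn n (2 * s)), abs_nonneg (lamn n (2 * s + 2))]
      have ihs := ih hs1 (by omega)
      have hcast : 2 * (s + 1) = 2 * s + 2 := by ring
      rw [hcast]
      have hn1 : (0 : ℤ) ≤ (n : ℤ) - 1 := by push_cast; omega
      nlinarith

lemma lam_lower (hn : 4 ∣ n) (T : Finset (Fin n)) (hT : T.Nonempty) :
    -(lamn n 0) ≤ ((n : ℤ) - 1) * lam T := by
  have hn0 : 0 < n := by
    rcases Nat.eq_zero_or_pos n with rfl | h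
    · exact absurd (Finset.eq_empty_of_isEmpty T ▸ hT) (by simp)
    · exact h
  have hd : (0 : ℤ) ≤ lamn n 0 := by rw [lamn_zero]; positivity
  rw [lam_eq_lamn T]
  set t := T.card with ht
  have ht1 : 1 ≤ t := Finset.card_pos.mpr hT
  have htn : t ≤ n := by simpa using T.card_le_univ
  rcases Nat.even_or_odd t with he | ho
  swap
  · rw [lamn_odd htn ho, mul_zero]
    linarith
  by_cases htn' : t = n
  · have hc := lamn_compl (n := n) hn (le_refl n)
    simp only [Nat.sub_self] at hc
    rw [htn', ← hc]
    have : (1 : ℤ) ≤ (n : ℤ) := by exact_mod_cast hn0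
    nlinarith
  · have key : ∀ u : ℕ, Even u → 1 ≤ u → 2 * u ≤ n →
        ((n : ℤ) - 1) * |lamn n u| ≤ lamn n 0 := by
      intro u hu h1 h2
      obtain ⟨a, rfl⟩ := hu
      have := key1 hn a (by omega) (by omega)
      rw [show 2 * a = a + a from by ring] at this
      exact this
    rcases le_or_gt (2 * t) n with hle | hlt
    · have hk := key t he ht1 hle
      nlinarith [neg_abs_le (lamn n t), abs_nonneg (lamn n t)]
    · have hcompl : lamn n (n - t) = lamn n t := lamn_compl hn htn
      have hn2 : 2 ∣ n := dvd_trans (by norm_num) hn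
      have ht2 : 2 ∣ t := he.two_dvd
      have heu : Even (n - t) := by
        obtain ⟨a, ha⟩ := hn2; obtain ⟨b, hb⟩ := ht2
        exact ⟨a - b, by omega⟩
      have hk := key (n - t) heu (by omega) (by omega)
      rw [hcompl] at hk
      nlinarith [neg_abs_le (lamn n t), abs_nonneg (lamn n t)]

lemma indep_bound (hn : 4 ∣ n) (hn0 : 0 < n) (A : Finset (Fin n → ℤˣ))
    (hA : ∀ x ∈ A, ∀ y ∈ A, ¬ (Omega n).Adj x y) :
    (n : ℤ) * A.card ≤ 2 ^ n := by
  classical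
  set f : (Fin n → ℤˣ) → ℤ := fun x => if x ∈ A then 1 else 0 with hf
  set a : ℤ := (A.card : ℤ) with ha
  have hfsum : ∑ x, f x = a := by simp [hf, ha]
  have hfsq : ∑ x, (f x) ^ 2 = a := by
    have h1 : ∀ x, (f x) ^ 2 = f x := by
      intro x; simp only [hf]; split <;> norm_num
    rw [Finset.sum_congr rfl fun x _ => h1 x, hfsum]
  have hzero : ∑ T : Finset (Fin n), lam T * (gg f T) ^ 2 = 0 := by
    rw [sum_lam_sq]
    have hz : ∀ x y : Fin n → ℤˣ, (if x * y ∈ SS n then f x * f y else 0) = 0 := by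
      intro x y
      split
      case isTrue h =>
        have horth : ∑ i, ((x i : ℤ) * (y i : ℤ)) = 0 := by
          have h2 := (Finset.mem_filter.mp h).2
          simpa [Units.val_mul] using h2
        have hxy : x ≠ y := by
          rintro rfl
          rw [Finset.sum_congr rfl (fun i _ => coe_mul_self (x i))] at horth
          simp at horth
          omega
        have hadj : (Omega n).Adj x y := ⟨hxy, horth⟩
        by_cases hx : x ∈ A
        · by_cases hy : y ∈ A
          · exact absurd hadj (hA x hx y hy)
          · simp [hf, hy]
        · simp [hf, hx]
      case isFalse h => rfl
    simp only [hz, Finset.sum_const_zero, mul_zero]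
  set d : ℤ := lamn n 0 with hd
  have hd0 : (0 : ℤ) < d := by
    rw [hd, lamn_zero]
    exact_mod_cast SS_card_pos (dvd_trans (by norm_num) hn)
  have hself : gg f ∅ = a := by rw [gg_empty, hfsum]
  have hpars : ∑ T : Finset (Fin n), (gg f T) ^ 2 = 2 ^ n * a := by
    rw [parseval, hfsq]
  have hlam_empty : lam (∅ : Finset (Fin n)) = d := by
    rw [lam_eq_lamn, hd, Finset.card_empty]
  have hLHS0 : ∑ T : Finset (Fin n), ((n : ℤ) - 1) * (lam T * (gg f T) ^ 2) = 0 := by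
    rw [← Finset.mul_sum, hzero, mul_zero]
  have hsplit := Finset.add_sum_erase Finset.univ
    (fun T : Finset (Fin n) => ((n : ℤ) - 1) * (lam T * (gg f T) ^ 2)) (Finset.mem_univ ∅)
  have hsplit2 := Finset.add_sum_erase Finset.univ
    (fun T : Finset (Fin n) => (gg f T) ^ 2) (Finset.mem_univ ∅)
  beta_reduce at hsplit hsplit2
  have hsum_erase : ∑ T ∈ Finset.univ.erase (∅ : Finset (Fin n)), (gg f T) ^ 2
      = 2 ^ n * a - a ^ 2 := by
    rw [hpars, hself] at hsplit2
    linarith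
  have hbound : ∀ T ∈ Finset.univ.erase (∅ : Finset (Fin n)),
      -(d * (gg f T) ^ 2) ≤ ((n : ℤ) - 1) * (lam T * (gg f T) ^ 2) := by
    intro T hT
    have hTne : T.Nonempty :=
      Finset.nonempty_of_ne_empty (Finset.ne_of_mem_erase hT)
    have h1 := lam_lower hn T hTne
    have h2 : (0 : ℤ) ≤ (gg f T) ^ 2 := sq_nonneg _
    nlinarith [mul_le_mul_of_nonneg_right h1 h2]
  have hrest0 : ∑ T ∈ Finset.univ.erase (∅ : Finset (Fin n)), -(d * (gg f T) ^ 2)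
      = -(d * (2 ^ n * a - a ^ 2)) := by
    rw [Finset.sum_neg_distrib, ← Finset.mul_sum, hsum_erase]
  have hrest : -(d * (2 ^ n * a - a ^ 2))
      ≤ ∑ T ∈ Finset.univ.erase (∅ : Finset (Fin n)),
          ((n : ℤ) - 1) * (lam T * (gg f T) ^ 2) := by
    rw [← hrest0]
    exact Finset.sum_le_sum hbound
  have hmain : ((n : ℤ) - 1) * (d * a ^ 2) - d * (2 ^ n * a - a ^ 2) ≤ 0 := by
    rw [hLHS0, hself, hlam_empty] at hsplit
    linarith
  have ha0 : (0 : ℤ) ≤ a := by rw [ha]; positivity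
  rcases eq_or_lt_of_le ha0 with h0 | hpos
  · rw [← h0, mul_zero]
    positivity
  · have hq : d * ((n : ℤ) * a * a - 2 ^ n * a) ≤ 0 := by nlinarith
    have hq2 : (n : ℤ) * a * a ≤ 2 ^ n * a := by nlinarith
    have := le_of_mul_le_mul_right (by linarith : ((n : ℤ) * a) * a ≤ (2 ^ n) * a) hpos
    linarith

end OmegaAux

open OmegaAux in
/-- If n ≡ 0 (mod 4) and n is not a power of 2, then χ(Ω_n) > n. -/
theorem omega_chromatic_gt (n : ℕ) (hn : 4 ∣ n) (hpow : ¬ ∃ k : ℕ, n = 2 ^ k) :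
    (n : ℕ∞) < (Omega n).chromaticNumber := by
  classical
  by_contra hcon
  push_neg at hcon
  rw [SimpleGraph.chromaticNumber_le_iff_colorable] at hcon
  obtain ⟨C⟩ := hcon
  have hn0 : 0 < n := by
    rcases Nat.eq_zero_or_pos n with rfl | h
    · exact (C (fun _ => 1)).elim0
    · exact h
  set fib : Fin n → Finset (Fin n → ℤˣ) :=
    fun i => Finset.univ.filter (fun x => C x = i) with hfib
  have hindep : ∀ i : Fin n, ∀ x ∈ fib i, ∀ y ∈ fib i, ¬ (Omega n).Adj x y := by
    intro i x hx y hy hadj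
    exact (C.valid hadj)
      ((Finset.mem_filter.mp hx).2.trans (Finset.mem_filter.mp hy).2.symm)
  have hbound : ∀ i : Fin n, (n : ℤ) * ((fib i).card : ℤ) ≤ 2 ^ n :=
    fun i => indep_bound hn hn0 _ (hindep i)
  have hsum : ∑ i : Fin n, (fib i).card = 2 ^ n := by
    have h1 := Finset.card_eq_sum_card_fiberwise
      (f := C) (s := (Finset.univ : Finset (Fin n → ℤˣ))) (t := Finset.univ)
      (fun x _ => Finset.mem_univ (C x))
    rw [Finset.card_univ, Fintype.card_fun, Fintype.card_fin,
      show Fintype.card ℤˣ = 2 by decide] at h1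
    exact h1.symm
  have hall : ∀ i : Fin n, (n : ℤ) * ((fib i).card : ℤ) = 2 ^ n := by
    by_contra hne
    push_neg at hne
    obtain ⟨i0, hi0⟩ := hne
    have hlt : (n : ℤ) * ((fib i0).card : ℤ) < 2 ^ n :=
      lt_of_le_of_ne (hbound i0) hi0
    have hstrict : ∑ i : Fin n, (n : ℤ) * ((fib i).card : ℤ)
        < ∑ _i : Fin n, (2 ^ n : ℤ) :=
      Finset.sum_lt_sum (fun i _ => hbound i) ⟨i0, Finset.mem_univ i0, hlt⟩
    rw [← Finset.mul_sum] at hstrict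
    have hcast : ∑ i : Fin n, ((fib i).card : ℤ) = (2 : ℤ) ^ n := by
      have := congrArg (fun m : ℕ => (m : ℤ)) hsum
      push_cast at this
      exact this
    rw [hcast] at hstrict
    simp only [Finset.sum_const, Finset.card_univ, Fintype.card_fin,
      nsmul_eq_mul] at hstrict
    exact lt_irrefl _ hstrict
  have hdvd : n ∣ 2 ^ n := by
    have hi0 : Fin n := ⟨0, hn0⟩
    have := hall hi0
    have : (n : ℤ) ∣ (2 : ℤ) ^ n := ⟨((fib hi0).card : ℤ), (hall hi0).symm⟩
    exact_mod_cast this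
  obtain ⟨k, _, hk⟩ := (Nat.dvd_prime_pow Nat.prime_two).mp hdvd
  exact hpow ⟨k, hk⟩
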